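/- arXiv:math/0410515 — 2 statements merged into one kernel-verified Lean document; each statement's English description precedes it below -/
import Mathlib

section
/- Let F be the free loop on one generator. The abelian group γ2 F / γ3 F is not finitely generated. -/
/-!
Send the generator `y` to `(1, 0)` in Higman's central extension `(ℤ, B)` of `ℤ` by the free
abelian group `B = ℤ^(ℤ)`, built from the cocycle `f(a, 1) = e_a` for `a ≥ 2` (and `0` otherwise).
Since `ℤ` is an abelian group, `γ₂ F` lands in `B`, which is central, so `γ₃ F` lands in `1`.
The commutator `[y^m, y] ∈ γ₂ F` goes to `e_m - f(1, m) = e_m`, so the image of `γ₂ F / γ₃ F`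
contains every `e_m` with `m ≥ 2`, whereas a finitely generated subgroup of `B` only involves
finitely many basis vectors.
-/

/-- A loop: a quasigroup with a two-sided identity. -/
class Loop (α : Type*) extends Mul α, One α where
  ldiv : α → α → α
  rdiv : α → α → α
  one_mul : ∀ a : α, 1 * a = a
  mul_one : ∀ a : α, a * 1 = a
  mul_ldiv : ∀ a b : α, a * ldiv a b = b
  ldiv_mul : ∀ a b : α, ldiv a (a * b) = b
  rdiv_mul : ∀ a b : α, rdiv a b * b = a
  mul_rdiv : ∀ a b : α, rdiv (a * b) b = a

namespace Loop

variable {α : Type*} [Loop α]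

/-- The commutator `[a,b] = (ba)\(ab)`. -/
def comm (a b : α) : α := ldiv (b * a) (a * b)

/-- The associator `(a,b,c) = (a(bc))\((ab)c)`. -/
def assoc (a b c : α) : α := ldiv (a * (b * c)) ((a * b) * c)

/-- The associator deviation indexed by a list of indices `αs = [α_n, ..., α_1]`
(stored with the *last* index first) applied to a list of arguments.
Level `0` (empty index list) is the associator. -/
def dev : List ℕ → List α → α
  | [], [a, b, c] => assoc a b c
  | (k :: rest), args =>
      let A : α → α := fun x => dev rest (args.take (k - 1) ++ x :: args.drop (k + 1))
      ldiv (A (args.getD (k - 1) 1) * A (args.getD k 1))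
        (A (args.getD (k - 1) 1 * args.getD k 1))
  | _, _ => 1

/-- A subset is a subloop if it contains `1` and is closed under
multiplication and both divisions. -/
def IsSubloop (S : Set α) : Prop :=
  (1 : α) ∈ S ∧ ∀ a ∈ S, ∀ b ∈ S, a * b ∈ S ∧ ldiv a b ∈ S ∧ rdiv a b ∈ S

/-- A subloop is normal if `xN = Nx`, `(Nx)y = N(xy)` and `y(xN) = (yx)N`. -/
def IsNormal (S : Set α) : Prop :=
  IsSubloop S ∧
  (∀ x : α, {z | ∃ n ∈ S, z = x * n} = {z | ∃ n ∈ S, z = n * x}) ∧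
  (∀ x y : α, {z | ∃ n ∈ S, z = (n * x) * y} = {z | ∃ n ∈ S, z = n * (x * y)}) ∧
  (∀ x y : α, {z | ∃ n ∈ S, z = y * (x * n)} = {z | ∃ n ∈ S, z = (y * x) * n})

/-- `N/M` is central in `L/M`: all commutators and associators involving an
element of `N` lie in `M`. -/
def CentralMod (N M : Set α) : Prop :=
  ∀ n ∈ N, ∀ x y : α,
    comm n x ∈ M ∧ comm x n ∈ M ∧
    assoc n x y ∈ M ∧ assoc x n y ∈ M ∧ assoc x y n ∈ M

/-- `[N,L]`: the smallest normal subloop `M` such that `N/M` is central in `L/M`. -/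
def bracket (N : Set α) : Set α := ⋂₀ {M | IsNormal M ∧ CentralMod N M}

end Loop

/-- The lower central series of a loop: `γ 1 = L`, `γ (i+1) = [γ i, L]`. -/
def Loop.gamma (α : Type*) [Loop α] : ℕ → Set α
  | 0 => Set.univ
  | 1 => Set.univ
  | (n + 2) => Loop.bracket (Loop.gamma α (n + 1))

namespace Loop

variable {α : Type*} [Loop α]

/-- A family `M i` of normal subloops is admissible for the
commutator-associator filtration. -/
def Admissible (M : ℕ → Set α) : Prop :=
  (∀ i, IsNormal (M i)) ∧ M 1 = Set.univ ∧
  (∀ i p q, 1 ≤ p → 1 ≤ q → i ≤ p + q →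
    ∀ a ∈ M p, ∀ b ∈ M q, comm a b ∈ M i) ∧
  (∀ i p q r, 1 ≤ p → 1 ≤ q → 1 ≤ r → i ≤ p + q + r →
    ∀ a ∈ M p, ∀ b ∈ M q, ∀ c ∈ M r, assoc a b c ∈ M i) ∧
  (∀ (i : ℕ) (idx ps : List ℕ) (xs : List α), idx ≠ [] →
    ps.length = idx.length + 3 → xs.length = idx.length + 3 →
    (∀ j < idx.length, 1 ≤ idx.getD j 0 ∧ idx.getD j 0 ≤ (idx.length - j) + 2) →
    (∀ j < ps.length, 1 ≤ ps.getD j 0 ∧ xs.getD j 1 ∈ M (ps.getD j 0)) →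
    i ≤ ps.sum → dev idx xs ∈ M i)

/-- The commutator-associator filtration: the smallest admissible family. -/
def casub (α : Type*) [Loop α] (i : ℕ) : Set α :=
  ⋂₀ {S | ∃ M : ℕ → Set α, Admissible M ∧ S = M i}

/-- Congruence modulo a (normal) subloop: `x ≡ y mod N` iff `x ∈ yN`. -/
def ModEq (N : Set α) (x y : α) : Prop := ∃ n ∈ N, x = y * n

/-- Loop homomorphisms: maps preserving multiplication. -/
def IsLoopHom {β : Type*} [Loop β] (φ : α → β) : Prop :=
  ∀ a b : α, φ (a * b) = φ a * φ b

/-- The subloop generated by a subset. -/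
def closure (S : Set α) : Set α := ⋂₀ {T | IsSubloop T ∧ S ⊆ T}

/-- Left-normed powers: `ypow y m = ((...(yy)y)...)y`. -/
def ypow (y : α) : ℕ → α
  | 0 => 1
  | (m + 1) => ypow y m * y

end Loop

section Higman

variable {L B : Type*} [Loop L] [AddCommGroup B]

/-- Multiplication in Higman's loop `(L, B)`. -/
def hmul (f : L → L → B) (x y : L × B) : L × B :=
  (x.1 * y.1, x.2 + y.2 + f x.1 y.1)

/-- Left division in Higman's loop: `(l2,b2)\(l1,b1) = (l2\l1, b1-b2-f(l2, l2\l1))`. -/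
def hldiv (f : L → L → B) (x y : L × B) : L × B :=
  (Loop.ldiv x.1 y.1, y.2 - x.2 - f x.1 (Loop.ldiv x.1 y.1))

/-- Right division in Higman's loop: `(l1,b1)/(l2,b2) = (l1/l2, b1-b2-f(l1/l2, l2))`. -/
def hrdiv (f : L → L → B) (x y : L × B) : L × B :=
  (Loop.rdiv x.1 y.1, x.2 - y.2 - f (Loop.rdiv x.1 y.1) y.1)

/-- The commutator in Higman's loop. -/
def hcomm (f : L → L → B) (x y : L × B) : L × B :=
  hldiv f (hmul f y x) (hmul f x y)

/-- The associator in Higman's loop. -/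
def hassoc (f : L → L → B) (x y z : L × B) : L × B :=
  hldiv f (hmul f x (hmul f y z)) (hmul f (hmul f x y) z)

end Higman

universe u


namespace Loop

variable {α β : Type*} [Loop α] [Loop β]

lemma mul_left_cancel {a b c : α} (h : a * b = a * c) : b = c := by
  rw [← ldiv_mul a b, h, ldiv_mul]

lemma mul_right_cancel {a b c : α} (h : a * c = b * c) : a = b := by
  rw [← mul_rdiv a c, h, mul_rdiv]

@[simp] lemma ldiv_self (a : α) : ldiv a a = 1 :=
  mul_left_cancel (by rw [mul_ldiv, mul_one])

@[simp] lemma rdiv_self (a : α) : rdiv a a = 1 :=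
  mul_right_cancel (by rw [rdiv_mul, one_mul])

@[simp] lemma comm_one_left (a : α) : comm 1 a = 1 := by
  rw [comm, one_mul, mul_one, ldiv_self]

@[simp] lemma comm_one_right (a : α) : comm a 1 = 1 := by
  rw [comm, one_mul, mul_one, ldiv_self]

@[simp] lemma assoc_one_left (a b : α) : assoc 1 a b = 1 := by
  rw [assoc, one_mul, one_mul, ldiv_self]

@[simp] lemma assoc_one_mid (a b : α) : assoc a 1 b = 1 := by
  rw [assoc, one_mul, mul_one, ldiv_self]

@[simp] lemma assoc_one_right (a b : α) : assoc a b 1 = 1 := by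
  rw [assoc, mul_one, mul_one, ldiv_self]

namespace IsLoopHom

variable {φ : α → β}

lemma map_mul (hφ : IsLoopHom φ) (a b : α) : φ (a * b) = φ a * φ b :=
  hφ a b

lemma map_one (hφ : IsLoopHom φ) : φ 1 = 1 :=
  mul_left_cancel (a := φ 1) (by rw [← hφ, mul_one, mul_one])

lemma map_ldiv (hφ : IsLoopHom φ) (a b : α) : φ (ldiv a b) = ldiv (φ a) (φ b) :=
  mul_left_cancel (a := φ a) (by rw [← hφ, mul_ldiv, mul_ldiv])

lemma map_rdiv (hφ : IsLoopHom φ) (a b : α) : φ (rdiv a b) = rdiv (φ a) (φ b) :=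
  mul_right_cancel (c := φ b) (by rw [← hφ, rdiv_mul, rdiv_mul])

lemma map_comm (hφ : IsLoopHom φ) (a b : α) : φ (comm a b) = comm (φ a) (φ b) := by
  rw [comm, comm, hφ.map_ldiv, hφ, hφ]

lemma map_assoc (hφ : IsLoopHom φ) (a b c : α) : φ (assoc a b c) = assoc (φ a) (φ b) (φ c) := by
  rw [assoc, assoc, hφ.map_ldiv, hφ, hφ, hφ, hφ]

lemma map_ypow (hφ : IsLoopHom φ) (y : α) (m : ℕ) : φ (ypow y m) = ypow (φ y) m := by
  induction m with
  | zero => exact hφ.map_one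
  | succ m ih => rw [ypow, ypow, hφ, ih]

lemma comp (hφ : IsLoopHom φ) {γ : Type*} [Loop γ] {ψ : β → γ} (hψ : IsLoopHom ψ) :
    IsLoopHom (ψ ∘ φ) :=
  fun a b => by simp only [Function.comp_apply, hφ a b, hψ (φ a) (φ b)]

end IsLoopHom

lemma IsSubloop.preimage {φ : α → β} (hφ : IsLoopHom φ) {U : Set β} (hU : IsSubloop U) :
    IsSubloop (φ ⁻¹' U) := by
  refine ⟨by simpa [Set.mem_preimage, hφ.map_one] using hU.1, fun a ha b hb => ?_⟩
  obtain ⟨hmul, hldiv, hrdiv⟩ := hU.2 (φ a) ha (φ b) hb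
  simp only [Set.mem_preimage, hφ a b, hφ.map_ldiv, hφ.map_rdiv]
  exact ⟨hmul, hldiv, hrdiv⟩

lemma isNormal_ker {φ : α → β} (hφ : IsLoopHom φ) : IsNormal {a : α | φ a = 1} := by
  have hsub : IsSubloop {a : α | φ a = 1} :=
    (show IsSubloop ({1} : Set β) by simp [IsSubloop, mul_one]).preimage hφ
  refine ⟨hsub, fun x => ?_, fun x y => ?_, fun x y => ?_⟩ <;>
    ext z <;> simp only [Set.mem_ofPred_eq] <;> constructor
  · rintro ⟨n, hn, rfl⟩
    refine ⟨rdiv (x * n) x, ?_, (rdiv_mul _ _).symm⟩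
    simp [hφ.map_rdiv, hφ.map_mul, hn, mul_one]
  · rintro ⟨n, hn, rfl⟩
    refine ⟨ldiv x (n * x), ?_, (mul_ldiv _ _).symm⟩
    simp [hφ.map_ldiv, hφ.map_mul, hn, one_mul]
  · rintro ⟨n, hn, rfl⟩
    refine ⟨rdiv ((n * x) * y) (x * y), ?_, (rdiv_mul _ _).symm⟩
    simp [hφ.map_rdiv, hφ.map_mul, hn, one_mul]
  · rintro ⟨n, hn, rfl⟩
    refine ⟨rdiv (rdiv (n * (x * y)) y) x, ?_, by rw [rdiv_mul, rdiv_mul]⟩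
    simp [hφ.map_rdiv, hφ.map_mul, hn, one_mul, mul_rdiv]
  · rintro ⟨n, hn, rfl⟩
    refine ⟨ldiv (y * x) (y * (x * n)), ?_, (mul_ldiv _ _).symm⟩
    simp [hφ.map_ldiv, hφ.map_mul, hn, mul_one]
  · rintro ⟨n, hn, rfl⟩
    refine ⟨ldiv x (ldiv y ((y * x) * n)), ?_, by rw [mul_ldiv, mul_ldiv]⟩
    simp [hφ.map_ldiv, hφ.map_mul, hn, mul_one, ldiv_mul]

lemma CentralMod.mono {N N' M : Set α} (h : CentralMod N' M) (hN : N ⊆ N') :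
    CentralMod N M :=
  fun n hn => h n (hN hn)

lemma bracket_subset {N M : Set α} (hM : IsNormal M) (hNM : CentralMod N M) : bracket N ⊆ M :=
  Set.sInter_subset_of_mem ⟨hM, hNM⟩

lemma closure_subset {S T : Set α} (hT : IsSubloop T) (hST : S ⊆ T) : closure S ⊆ T :=
  Set.sInter_subset_of_mem ⟨hT, hST⟩

lemma bracket_subset_ker {N : Set α} {φ : α → β} (hφ : IsLoopHom φ)
    (hN : CentralMod (φ '' N) {1}) : bracket N ⊆ {a | φ a = 1} := by
  refine bracket_subset (isNormal_ker hφ) fun n hn x y => ?_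
  simpa only [Set.mem_ofPred_eq, Set.mem_singleton_iff, hφ.map_comm, hφ.map_assoc] using
    hN (φ n) ⟨n, hn, rfl⟩ (φ x) (φ y)

lemma comm_mem_gamma_two (a b : α) : comm a b ∈ gamma α 2 :=
  fun _ ⟨_, hM⟩ => (hM a trivial b b).1

end Loop

instance Group.toLoop {G : Type*} [Group G] : Loop G where
  ldiv a b := a⁻¹ * b
  rdiv a b := a * b⁻¹
  one_mul := one_mul
  mul_one := mul_one
  mul_ldiv := mul_inv_cancel_left
  ldiv_mul := inv_mul_cancel_left
  rdiv_mul := inv_mul_cancel_right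
  mul_rdiv := mul_inv_cancel_right

universe v in
instance ULift.instLoop {α : Type*} [Loop α] : Loop (ULift.{v} α) where
  mul a b := ⟨a.down * b.down⟩
  one := ⟨1⟩
  ldiv a b := ⟨Loop.ldiv a.down b.down⟩
  rdiv a b := ⟨Loop.rdiv a.down b.down⟩
  one_mul a := congrArg ULift.up (Loop.one_mul a.down)
  mul_one a := congrArg ULift.up (Loop.mul_one a.down)
  mul_ldiv a b := congrArg ULift.up (Loop.mul_ldiv a.down b.down)
  ldiv_mul a b := congrArg ULift.up (Loop.ldiv_mul a.down b.down)
  rdiv_mul a b := congrArg ULift.up (Loop.rdiv_mul a.down b.down)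
  mul_rdiv a b := congrArg ULift.up (Loop.mul_rdiv a.down b.down)

namespace Loop

variable {G : Type*}

lemma ypow_eq_pow [Group G] (g : G) (m : ℕ) : ypow g m = g ^ m := by
  induction m with
  | zero => exact (pow_zero g).symm
  | succ m ih => rw [ypow, ih, pow_succ]

lemma comm_eq_one [CommGroup G] (a b : G) : comm a b = 1 :=
  show (b * a)⁻¹ * (a * b) = 1 by rw [mul_comm b a, inv_mul_cancel]

lemma assoc_eq_one [Group G] (a b c : G) : assoc a b c = 1 :=
  show (a * (b * c))⁻¹ * (a * b * c) = 1 by rw [mul_assoc, inv_mul_cancel]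

lemma centralMod_univ_one [CommGroup G] : CentralMod (Set.univ : Set G) {1} :=
  fun _ _ _ _ => ⟨comm_eq_one _ _, comm_eq_one _ _, assoc_eq_one _ _ _,
    assoc_eq_one _ _ _, assoc_eq_one _ _ _⟩

lemma gamma_two_subset_ker {α : Type*} [Loop α] [CommGroup G] {φ : α → G} (hφ : IsLoopHom φ) :
    gamma α 2 ⊆ {a | φ a = 1} :=
  bracket_subset_ker hφ (centralMod_univ_one.mono (Set.subset_univ _))

end Loop

structure NormalizedCocycle (L B : Type*) [Loop L] [AddCommGroup B] where
  toFun : L → L → B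
  map_one_left : ∀ b, toFun 1 b = 0
  map_one_right : ∀ a, toFun a 1 = 0

-- A type synonym, so that the componentwise `Mul` of `L × B` does not compete with `hmul`.
def HigmanLoop {L B : Type*} [Loop L] [AddCommGroup B] (_ : NormalizedCocycle L B) : Type _ :=
  L × B

namespace HigmanLoop

open Loop

variable {L B : Type*} [Loop L] [AddCommGroup B] {f : NormalizedCocycle L B}

instance : Loop (HigmanLoop f) where
  mul := hmul f.toFun
  one := (1, 0)
  ldiv := hldiv f.toFun
  rdiv := hrdiv f.toFun
  one_mul x := Prod.ext (one_mul x.1)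
    (show 0 + x.2 + f.toFun 1 x.1 = x.2 by rw [f.map_one_left, zero_add, add_zero])
  mul_one x := Prod.ext (mul_one x.1)
    (show x.2 + 0 + f.toFun x.1 1 = x.2 by rw [f.map_one_right, add_zero, add_zero])
  mul_ldiv x y := Prod.ext (mul_ldiv x.1 y.1)
    (show x.2 + (y.2 - x.2 - f.toFun x.1 (ldiv x.1 y.1)) + f.toFun x.1 (ldiv x.1 y.1) = y.2 by
      abel)
  ldiv_mul x y := Prod.ext (ldiv_mul x.1 y.1)
    (show x.2 + y.2 + f.toFun x.1 y.1 - x.2 - f.toFun x.1 (ldiv x.1 (x.1 * y.1)) = y.2 by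
      rw [ldiv_mul]; abel)
  rdiv_mul x y := Prod.ext (rdiv_mul x.1 y.1)
    (show x.2 - y.2 - f.toFun (rdiv x.1 y.1) y.1 + y.2 + f.toFun (rdiv x.1 y.1) y.1 = x.2 by
      abel)
  mul_rdiv x y := Prod.ext (mul_rdiv x.1 y.1)
    (show x.2 + y.2 + f.toFun x.1 y.1 - y.2 - f.toFun (rdiv (x.1 * y.1) y.1) y.1 = x.2 by
      rw [mul_rdiv]; abel)

lemma isLoopHom_fst : IsLoopHom (fun x : HigmanLoop f => x.1) :=
  fun _ _ => rfl

lemma comm_eq (x y : HigmanLoop f) :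
    comm x y = (comm x.1 y.1,
      f.toFun x.1 y.1 - f.toFun y.1 x.1 - f.toFun (y.1 * x.1) (comm x.1 y.1)) :=
  Prod.ext rfl (show x.2 + y.2 + f.toFun x.1 y.1 - (y.2 + x.2 + f.toFun y.1 x.1) -
      f.toFun (y.1 * x.1) (comm x.1 y.1) = _ by abel_nf)

lemma assoc_eq (x y z : HigmanLoop f) :
    assoc x y z = (assoc x.1 y.1 z.1,
      f.toFun x.1 y.1 + f.toFun (x.1 * y.1) z.1 - f.toFun y.1 z.1 - f.toFun x.1 (y.1 * z.1) -
        f.toFun (x.1 * (y.1 * z.1)) (assoc x.1 y.1 z.1)) :=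
  Prod.ext rfl (show x.2 + y.2 + f.toFun x.1 y.1 + z.2 + f.toFun (x.1 * y.1) z.1 -
      (x.2 + (y.2 + z.2 + f.toFun y.1 z.1) + f.toFun x.1 (y.1 * z.1)) -
      f.toFun (x.1 * (y.1 * z.1)) (assoc x.1 y.1 z.1) = _ by abel_nf)

lemma centralMod_fst_eq_one : CentralMod {x : HigmanLoop f | x.1 = 1} {1} := by
  rintro n (hn : n.1 = 1) x y
  simp only [comm_eq, assoc_eq, hn, comm_one_left, comm_one_right,
    assoc_one_left, assoc_one_mid, assoc_one_right, Loop.one_mul, Loop.mul_one, f.map_one_left,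
    f.map_one_right, sub_self, sub_zero, zero_add, add_zero]
  exact ⟨rfl, rfl, rfl, rfl, rfl⟩

lemma isSubloop_fst_eq_one_snd_mem (G : AddSubgroup B) :
    IsSubloop {x : HigmanLoop f | x.1 = 1 ∧ x.2 ∈ G} := by
  refine ⟨⟨rfl, G.zero_mem⟩, ?_⟩
  rintro ⟨a, b⟩ ⟨rfl, hb⟩ ⟨a', b'⟩ ⟨rfl, hb'⟩
  refine ⟨⟨mul_one 1, ?_⟩, ⟨ldiv_self 1, ?_⟩, ⟨rdiv_self 1, ?_⟩⟩
  · show b + b' + f.toFun 1 1 ∈ G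
    rw [f.map_one_left, add_zero]
    exact G.add_mem hb hb'
  · show b' - b - f.toFun 1 (ldiv 1 1) ∈ G
    rw [f.map_one_left, sub_zero]
    exact G.sub_mem hb' hb
  · show b - b' - f.toFun (rdiv 1 1) 1 ∈ G
    rw [f.map_one_right, sub_zero]
    exact G.sub_mem hb hb'

end HigmanLoop

lemma HigmanLoop.gamma_three_subset_ker {α L B : Type*} [Loop α] [CommGroup L] [AddCommGroup B]
    {f : NormalizedCocycle L B} {φ : α → HigmanLoop f} (hφ : Loop.IsLoopHom φ) :
    Loop.gamma α 3 ⊆ {a | φ a = 1} :=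
  Loop.bracket_subset_ker hφ (centralMod_fst_eq_one.mono (Set.image_subset_iff.2
    (Loop.gamma_two_subset_ker (hφ.comp isLoopHom_fst))))

lemma HigmanLoop.closure_union_gamma_three_subset {α L B : Type*} [Loop α] [CommGroup L]
    [AddCommGroup B] {f : NormalizedCocycle L B} {φ : α → HigmanLoop f} (hφ : Loop.IsLoopHom φ)
    {S : Set α} (hS : S ⊆ Loop.gamma α 2) :
    Loop.closure (S ∪ Loop.gamma α 3) ⊆
      φ ⁻¹' {x | x.1 = 1 ∧ x.2 ∈ AddSubgroup.closure ((fun s => (φ s).2) '' S)} := by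
  refine Loop.closure_subset ((isSubloop_fst_eq_one_snd_mem _).preimage hφ) ?_
  rintro a (ha | ha)
  · exact ⟨Loop.gamma_two_subset_ker (hφ.comp isLoopHom_fst) (hS ha),
      AddSubgroup.subset_closure ⟨a, ha, rfl⟩⟩
  · rw [Set.mem_preimage, gamma_three_subset_ker hφ ha]
    exact ⟨rfl, AddSubgroup.zero_mem _⟩

lemma Finsupp.finite_setOf_single_one_mem_addSubgroupClosure {ι R : Type*} [Ring R]
    [Nontrivial R] {s : Set (ι →₀ R)} (hs : s.Finite) :
    {i | single i (1 : R) ∈ AddSubgroup.closure s}.Finite := by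
  refine (hs.biUnion fun x _ => x.support.finite_toSet).subset fun i hi => ?_
  have hle : AddSubgroup.closure s ≤
      (supported R R (⋃ x ∈ s, (x.support : Set ι))).toAddSubgroup :=
    (AddSubgroup.closure_le _).2 fun x hx => (mem_supported R x).2
      (Set.subset_biUnion_of_mem (u := fun x : ι →₀ R => (x.support : Set ι)) hx)
  exact (mem_supported R _).1 (hle hi) (by simp)

open Multiplicative in
noncomputable def singleCocycle : NormalizedCocycle (Multiplicative ℤ) (ℤ →₀ ℤ) where
  toFun a b := if b = ofAdd 1 ∧ 1 < toAdd a then Finsupp.single (toAdd a) 1 else 0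
  map_one_left b := if_neg fun h => absurd h.2 (by simp)
  map_one_right a := if_neg fun h => one_ne_zero (ofAdd_eq_one.1 h.1.symm)

open Multiplicative in
lemma singleCocycle_comm {x y : HigmanLoop singleCocycle} {m : ℤ} (hm : 1 < m)
    (hx : x.1 = ofAdd m) (hy : y.1 = ofAdd 1) : Loop.comm x y = (1, Finsupp.single m 1) := by
  rw [HigmanLoop.comm_eq, Loop.comm_eq_one, singleCocycle.map_one_right, hx, hy]
  simp only [singleCocycle, toAdd_ofAdd, hm, and_self, ↓reduceIte, EmbeddingLike.apply_eq_iff_eq,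
    lt_self_iff_false, and_false, sub_zero]
  rfl

open Loop Multiplicative

/-- for `F` the free loop on one generator `y`, the abelian
group `γ₂F/γ₃F` is not finitely generated: there is no finite subset `S` of
`γ₂ F` such that `γ₂ F` is contained in the subloop generated by `S` together
with `γ₃ F`. -/
theorem gamma2_mod_gamma3_not_fg {F : Type u} [Loop F] (y : F)
    (hfree : ∀ (M : Type u) [Loop M] (m : M),
      ∃! φ : F → M, Loop.IsLoopHom φ ∧ φ y = m) :
    ¬ ∃ S : Finset F, (S : Set F) ⊆ Loop.gamma F 2 ∧
        Loop.gamma F 2 ⊆ Loop.closure ((S : Set F) ∪ Loop.gamma F 3) := by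
  rintro ⟨S, hS2, hSgen⟩
  obtain ⟨φ', ⟨hφ', hy⟩, -⟩ := hfree (ULift.{u} (HigmanLoop singleCocycle)) ⟨(ofAdd 1, 0)⟩
  let φ : F → HigmanLoop singleCocycle := fun a => (φ' a).down
  have hφ : IsLoopHom φ := fun a b => congrArg ULift.down (hφ' a b)
  have hφy : φ y = (ofAdd 1, 0) := congrArg ULift.down hy
  have hfst : IsLoopHom fun a => (φ a).1 := hφ.comp HigmanLoop.isLoopHom_fst
  set G := AddSubgroup.closure ((fun s => (φ s).2) '' S)
  have hsingle : ∀ m : ℕ, 2 ≤ m → Finsupp.single (m : ℤ) 1 ∈ G := by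
    intro m hm
    have hpow : (φ (ypow y m)).1 = ofAdd (m : ℤ) := by
      rw [hfst.map_ypow, hφy, ypow_eq_pow, ← ofAdd_nsmul, nsmul_one]
    have hmem := HigmanLoop.closure_union_gamma_three_subset hφ hS2 (hSgen (comm_mem_gamma_two (ypow y m) y))
    rw [Set.mem_preimage, hφ.map_comm, singleCocycle_comm (by omega) hpow (by rw [hφy])] at hmem
    exact hmem.2
  have hfin : {i : ℤ | Finsupp.single i 1 ∈ G}.Finite :=
    Finsupp.finite_setOf_single_one_mem_addSubgroupClosure (S.finite_toSet.image _)
  exact Set.Ici_infinite 2 ((hfin.preimage Nat.cast_injective.injOn).subset hsingle)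
end

section
/- Higman's lemma: let F be a free loop on a set X, p: F → L a surjective loop homomorphism with kernel N, B the free abelian group on symbols f(l1,l2) (l1,l2 ≠ 1 in L) and g(x) (x ∈ X), and δ: F → (L,B) the homomorphism with δx = (px, g(x)). Then ker δ = [N,F]. -/
universe u v w
namespace HigmanAux

open Loop

variable {α : Type*} [Loop α]

theorem lcancel {a b c : α} (h : a * b = a * c) : b = c := by
  have := Loop.ldiv_mul a b
  rw [h, Loop.ldiv_mul] at this
  exact this.symm

theorem rcancel {a b c : α} (h : b * a = c * a) : b = c := by
  have := Loop.mul_rdiv b a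
  rw [h, Loop.mul_rdiv] at this
  exact this.symm

@[simp] theorem ldiv_self (a : α) : Loop.ldiv a a = 1 := by
  have := Loop.ldiv_mul a 1
  rwa [Loop.mul_one] at this

@[simp] theorem rdiv_self (a : α) : Loop.rdiv a a = 1 := by
  have := Loop.mul_rdiv 1 a
  rwa [Loop.one_mul] at this

theorem ldiv_one_eq (a : α) : Loop.ldiv (1:α) a = a := by
  have := Loop.ldiv_mul (1:α) a
  rwa [Loop.one_mul] at this

theorem rdiv_one_eq (a : α) : Loop.rdiv a (1:α) = a := by
  have := Loop.mul_rdiv a (1:α)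
  rwa [Loop.mul_one] at this

theorem eq_of_ldiv_eq_one {a b : α} (h : Loop.ldiv a b = 1) : a = b := by
  have := Loop.mul_ldiv a b
  rw [h, Loop.mul_one] at this
  exact this

theorem eq_one_of_self_mul_self {a : α} (h : a * a = a) : a = 1 := by
  have : a * a = a * 1 := by rw [Loop.mul_one]; exact h
  exact (lcancel this)

section Normal

variable {N : Set α} (hN : Loop.IsNormal N)
include hN
set_option linter.unusedSectionVars false

theorem mem_one : (1:α) ∈ N := hN.1.1

theorem mem_mul {a b : α} (ha : a ∈ N) (hb : b ∈ N) : a * b ∈ N :=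
  (hN.1.2 a ha b hb).1

theorem mem_ldiv {a b : α} (ha : a ∈ N) (hb : b ∈ N) : Loop.ldiv a b ∈ N :=
  (hN.1.2 a ha b hb).2.1

/-- `x*n = n'*x` -/
theorem c1l {n : α} (hn : n ∈ N) (x : α) : ∃ n' ∈ N, x * n = n' * x := by
  have h := Set.ext_iff.mp (hN.2.1 x) (x * n)
  exact h.mp ⟨n, hn, rfl⟩

/-- `n*x = x*n'` -/
theorem c1r {n : α} (hn : n ∈ N) (x : α) : ∃ n' ∈ N, n * x = x * n' := by
  have h := Set.ext_iff.mp (hN.2.1 x) (n * x)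
  exact h.mpr ⟨n, hn, rfl⟩

/-- `(n*x)*y = n'*(x*y)` -/
theorem c2l {n : α} (hn : n ∈ N) (x y : α) : ∃ n' ∈ N, (n * x) * y = n' * (x * y) := by
  have h := Set.ext_iff.mp (hN.2.2.1 x y) ((n * x) * y)
  exact h.mp ⟨n, hn, rfl⟩

/-- `n*(x*y) = (n'*x)*y` -/
theorem c2r {n : α} (hn : n ∈ N) (x y : α) : ∃ n' ∈ N, n * (x * y) = (n' * x) * y := by
  have h := Set.ext_iff.mp (hN.2.2.1 x y) (n * (x * y))
  exact h.mpr ⟨n, hn, rfl⟩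

/-- `y*(x*n) = (y*x)*n'` -/
theorem c3l {n : α} (hn : n ∈ N) (x y : α) : ∃ n' ∈ N, y * (x * n) = (y * x) * n' := by
  have h := Set.ext_iff.mp (hN.2.2.2 x y) (y * (x * n))
  exact h.mp ⟨n, hn, rfl⟩

/-- `(y*x)*n = y*(x*n')` -/
theorem c3r {n : α} (hn : n ∈ N) (x y : α) : ∃ n' ∈ N, (y * x) * n = y * (x * n') := by
  have h := Set.ext_iff.mp (hN.2.2.2 x y) ((y * x) * n)
  exact h.mpr ⟨n, hn, rfl⟩

theorem modeq_refl (x : α) : Loop.ModEq N x x := ⟨1, mem_one hN, (Loop.mul_one x).symm⟩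

theorem modeq_of_mem {n : α} (hn : n ∈ N) : Loop.ModEq N n 1 :=
  ⟨n, hn, (Loop.one_mul n).symm⟩

theorem mem_of_modeq_one {x : α} (h : Loop.ModEq N x 1) : x ∈ N := by
  obtain ⟨n, hn, h⟩ := h
  rw [Loop.one_mul] at h
  exact h ▸ hn

/-- key coset lemma: `(y*n)*m = y*m'` and conversely. -/
theorem coset_shift {n : α} (hn : n ∈ N) (y : α) {m : α} (hm : m ∈ N) :
    ∃ m' ∈ N, (y * n) * m = y * m' := by
  obtain ⟨m', hm', h⟩ := c3r hN hm n y
  exact ⟨n * m', mem_mul hN hn hm', h⟩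

theorem coset_shift' {n : α} (hn : n ∈ N) (y : α) {m : α} (hm : m ∈ N) :
    ∃ m' ∈ N, y * m = (y * n) * m' := by
  obtain ⟨k, hk, hk2⟩ := c3l hN (mem_ldiv hN hn hm) n y
  rw [Loop.mul_ldiv] at hk2
  exact ⟨k, hk, hk2⟩

theorem modeq_symm {x y : α} (h : Loop.ModEq N x y) : Loop.ModEq N y x := by
  obtain ⟨n, hn, rfl⟩ := h
  obtain ⟨m', hm', h⟩ := coset_shift' hN hn y (mem_one hN)
  rw [Loop.mul_one] at h
  exact ⟨m', hm', h⟩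

theorem modeq_trans {x y z : α} (h1 : Loop.ModEq N x y) (h2 : Loop.ModEq N y z) :
    Loop.ModEq N x z := by
  obtain ⟨n, hn, rfl⟩ := h1
  obtain ⟨m, hm, rfl⟩ := h2
  obtain ⟨m', hm', h⟩ := coset_shift hN hm z hn
  exact ⟨m', hm', h⟩

theorem modeq_mul {x x' y y' : α} (h1 : Loop.ModEq N x x') (h2 : Loop.ModEq N y y') :
    Loop.ModEq N (x * y) (x' * y') := by
  obtain ⟨m, hm, rfl⟩ := h1
  obtain ⟨n, hn, rfl⟩ := h2
  obtain ⟨m1, hm1, e1⟩ := c1l hN hm x'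
  obtain ⟨m2, hm2, e2⟩ := c2l hN hm1 x' (y' * n)
  obtain ⟨n3, hn3, e3⟩ := c3l hN hn y' x'
  obtain ⟨n4, hn4, e4⟩ := c1l hN hn3 (x' * y')
  obtain ⟨m5, hm5, e5⟩ := c2r hN hm2 n4 (x' * y')
  obtain ⟨m7, hm7, e7⟩ := c1r hN (mem_mul hN hm5 hn4) (x' * y')
  refine ⟨m7, hm7, ?_⟩
  calc (x' * m) * (y' * n) = (m1 * x') * (y' * n) := by rw [e1]
    _ = m2 * (x' * (y' * n)) := e2
    _ = m2 * ((x' * y') * n3) := by rw [e3]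
    _ = m2 * (n4 * (x' * y')) := by rw [e4]
    _ = (m5 * n4) * (x' * y') := e5
    _ = (x' * y') * m7 := e7

/-- left cancellation modulo N -/
theorem modeq_lcancel {a c c' : α} (h : Loop.ModEq N (a * c) (a * c')) :
    Loop.ModEq N c c' := by
  obtain ⟨n, hn, h⟩ := h
  obtain ⟨n', hn', e⟩ := c3r hN hn c' a
  rw [e] at h
  exact ⟨n', hn', lcancel h⟩

/-- right cancellation modulo N -/
theorem modeq_rcancel {a c c' : α} (h : Loop.ModEq N (c * a) (c' * a)) :
    Loop.ModEq N c c' := by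
  obtain ⟨n, hn, h⟩ := h
  obtain ⟨n1, hn1, e1⟩ := c1l hN hn (c' * a)
  obtain ⟨n2, hn2, e2⟩ := c2r hN hn1 c' a
  rw [e1, e2] at h
  obtain ⟨n3, hn3, e3⟩ := c1r hN hn2 c'
  exact ⟨n3, hn3, by rw [← e3]; exact rcancel h⟩

theorem modeq_ldiv {a a' b b' : α} (h1 : Loop.ModEq N a a') (h2 : Loop.ModEq N b b') :
    Loop.ModEq N (Loop.ldiv a b) (Loop.ldiv a' b') := by
  have key : Loop.ModEq N (a * Loop.ldiv a b) (a * Loop.ldiv a' b') := by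
    rw [Loop.mul_ldiv]
    exact modeq_trans hN h2 (modeq_symm hN
      (modeq_trans hN (modeq_mul hN h1 (modeq_refl hN _))
        (by rw [Loop.mul_ldiv]; exact modeq_refl hN _)))
  exact modeq_lcancel hN key

theorem modeq_rdiv {a a' b b' : α} (h1 : Loop.ModEq N a a') (h2 : Loop.ModEq N b b') :
    Loop.ModEq N (Loop.rdiv a b) (Loop.rdiv a' b') := by
  have key : Loop.ModEq N (Loop.rdiv a b * b) (Loop.rdiv a' b' * b) := by
    rw [Loop.rdiv_mul]
    exact modeq_trans hN h1 (modeq_symm hN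
      (modeq_trans hN (modeq_mul hN (modeq_refl hN _) h2)
        (by rw [Loop.rdiv_mul]; exact modeq_refl hN _)))
  exact modeq_rcancel hN key

end Normal

/-- The quotient setoid of a normal subloop. -/
def qsetoid {N : Set α} (hN : Loop.IsNormal N) : Setoid α :=
  ⟨Loop.ModEq N, ⟨modeq_refl hN, modeq_symm hN, modeq_trans hN⟩⟩

/-- The quotient loop. -/
def HQ {N : Set α} (hN : Loop.IsNormal N) : Type _ := Quotient (qsetoid hN)

variable {N : Set α} {hN : Loop.IsNormal N}

/-- The quotient map. -/
def qmk (hN : Loop.IsNormal N) (a : α) : HQ hN := Quotient.mk (qsetoid hN) a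

instance : Loop (HQ hN) where
  mul := Quotient.map₂ (· * ·) (fun _ _ h1 _ _ h2 => modeq_mul hN h1 h2)
  one := qmk hN 1
  ldiv := Quotient.map₂ Loop.ldiv (fun _ _ h1 _ _ h2 => modeq_ldiv hN h1 h2)
  rdiv := Quotient.map₂ Loop.rdiv (fun _ _ h1 _ _ h2 => modeq_rdiv hN h1 h2)
  one_mul := fun a => Quotient.inductionOn a (fun a => congrArg (qmk hN) (Loop.one_mul a))
  mul_one := fun a => Quotient.inductionOn a (fun a => congrArg (qmk hN) (Loop.mul_one a))
  mul_ldiv := fun a b => Quotient.inductionOn₂ a b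
    (fun a b => congrArg (qmk hN) (Loop.mul_ldiv a b))
  ldiv_mul := fun a b => Quotient.inductionOn₂ a b
    (fun a b => congrArg (qmk hN) (Loop.ldiv_mul a b))
  rdiv_mul := fun a b => Quotient.inductionOn₂ a b
    (fun a b => congrArg (qmk hN) (Loop.rdiv_mul a b))
  mul_rdiv := fun a b => Quotient.inductionOn₂ a b
    (fun a b => congrArg (qmk hN) (Loop.mul_rdiv a b))

@[simp] theorem qmk_mul (a b : α) : qmk hN a * qmk hN b = qmk hN (a * b) := rfl

@[simp] theorem qmk_one : (1 : HQ hN) = qmk hN 1 := rfl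

@[simp] theorem qmk_ldiv (a b : α) :
    Loop.ldiv (qmk hN a) (qmk hN b) = qmk hN (Loop.ldiv a b) := rfl

@[simp] theorem qmk_rdiv (a b : α) :
    Loop.rdiv (qmk hN a) (qmk hN b) = qmk hN (Loop.rdiv a b) := rfl

theorem qmk_hom : Loop.IsLoopHom (qmk hN) := fun _ _ => rfl

theorem qmk_surjective : Function.Surjective (qmk hN) :=
  fun q => Quotient.inductionOn q (fun a => ⟨a, rfl⟩)

theorem qmk_eq_iff {a b : α} : qmk hN a = qmk hN b ↔ Loop.ModEq N a b := by
  constructor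
  · exact fun h => Quotient.exact h
  · exact fun h => Quotient.sound h

theorem qmk_eq_one_iff {a : α} : qmk hN a = 1 ↔ a ∈ N := by
  rw [qmk_one, qmk_eq_iff]
  exact ⟨mem_of_modeq_one hN, fun h => modeq_of_mem hN h⟩

section Center

variable {β : Type*} [Loop β]

/-- A central element of a loop: commutes and associates with everything. -/
def IsCentral (q : β) : Prop :=
  (∀ u, q * u = u * q) ∧ (∀ u v, (q * u) * v = q * (u * v)) ∧
  (∀ u v, (u * q) * v = u * (q * v)) ∧ (∀ u v, (u * v) * q = u * (v * q))

theorem central_one : IsCentral (1 : β) := by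
  refine ⟨fun u => by rw [Loop.one_mul, Loop.mul_one], fun u v => ?_, fun u v => ?_,
    fun u v => ?_⟩ <;> simp only [Loop.one_mul, Loop.mul_one]

theorem central_mul {q r : β} (hq : IsCentral q) (hr : IsCentral r) :
    IsCentral (q * r) := by
  obtain ⟨qc, q1, q2, q3⟩ := hq
  obtain ⟨rc, r1, r2, r3⟩ := hr
  refine ⟨fun u => ?_, fun u v => ?_, fun u v => ?_, fun u v => ?_⟩
  · calc (q * r) * u = q * (r * u) := q1 r u
      _ = q * (u * r) := by rw [rc]
      _ = (q * u) * r := (q1 u r).symm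
      _ = (u * q) * r := by rw [qc]
      _ = u * (q * r) := r3 u q
  · calc ((q * r) * u) * v = (q * (r * u)) * v := by rw [q1]
      _ = q * ((r * u) * v) := q1 _ _
      _ = q * (r * (u * v)) := by rw [r1]
      _ = (q * r) * (u * v) := (q1 _ _).symm
  · calc (u * (q * r)) * v = ((u * q) * r) * v := by rw [r3]
      _ = (u * q) * (r * v) := r2 _ _
      _ = u * (q * (r * v)) := q2 _ _
      _ = u * ((q * r) * v) := by rw [q1]
  · calc (u * v) * (q * r) = ((u * v) * q) * r := by rw [r3]
      _ = (u * (v * q)) * r := by rw [q3]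
      _ = u * ((v * q) * r) := r3 _ _
      _ = u * (v * (q * r)) := by rw [r3]

theorem central_mul_inv {q : β} (hq : IsCentral q) : q * Loop.ldiv q 1 = 1 :=
  Loop.mul_ldiv q 1

theorem central_inv_mul {q : β} (hq : IsCentral q) : Loop.ldiv q 1 * q = 1 := by
  rw [← hq.1 (Loop.ldiv q 1)]
  exact Loop.mul_ldiv q 1

theorem central_inv {q : β} (hq : IsCentral q) : IsCentral (Loop.ldiv q 1) := by
  obtain ⟨qc, q1, q2, q3⟩ := hq
  set i := Loop.ldiv q 1 with hi
  have hqi : q * i = 1 := Loop.mul_ldiv q 1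
  have hiq : i * q = 1 := by rw [← qc i]; exact hqi
  have hcomm : ∀ u, i * u = u * i := by
    intro u
    apply lcancel (a := q)
    calc q * (i * u) = (q * i) * u := (q1 i u).symm
      _ = 1 * u := by rw [hqi]
      _ = u := Loop.one_mul u
      _ = u * 1 := (Loop.mul_one u).symm
      _ = u * (q * i) := by rw [hqi]
      _ = (u * q) * i := (q2 u i).symm
      _ = (q * u) * i := by rw [qc]
      _ = q * (u * i) := by
          have := q1 u i
          exact this
  have hs1 : ∀ u v, (i * u) * v = i * (u * v) := by
    intro u v
    apply lcancel (a := q)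
    calc q * ((i * u) * v) = (q * (i * u)) * v := (q1 (i * u) v).symm
      _ = ((q * i) * u) * v := by rw [q1 i u]
      _ = (1 * u) * v := by rw [hqi]
      _ = u * v := by rw [Loop.one_mul]
      _ = 1 * (u * v) := (Loop.one_mul _).symm
      _ = (q * i) * (u * v) := by rw [hqi]
      _ = q * (i * (u * v)) := q1 _ _
  have hs3 : ∀ u v, (u * v) * i = u * (v * i) := by
    intro u v
    apply rcancel (a := q)
    calc ((u * v) * i) * q = (u * v) * (i * q) := q3 _ _
      _ = (u * v) * 1 := by rw [hiq]
      _ = u * v := Loop.mul_one _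
      _ = u * (v * 1) := by rw [Loop.mul_one]
      _ = u * (v * (i * q)) := by rw [hiq]
      _ = u * ((v * i) * q) := by rw [q3]
      _ = (u * (v * i)) * q := (q3 _ _).symm
  refine ⟨hcomm, hs1, fun u v => ?_, hs3⟩
  -- slot 2: (u * i) * v = u * (i * v)
  apply rcancel (a := q)
  calc ((u * i) * v) * q = (u * i) * (v * q) := q3 _ _
    _ = (u * i) * (q * v) := by rw [qc]
    _ = ((u * i) * q) * v := (q2 _ _).symm
    _ = (u * (i * q)) * v := by rw [q3]
    _ = (u * 1) * v := by rw [hiq]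
    _ = u * v := by rw [Loop.mul_one]
    _ = u * (v * 1) := by rw [Loop.mul_one]
    _ = u * (v * (i * q)) := by rw [hiq]
    _ = u * ((i * v) * q) := by
        have h1 : v * (i * q) = (v * i) * q := (q3 v i).symm
        have h2 : (v * i) * q = (i * v) * q := by rw [hcomm v]
        rw [h1, h2]
    _ = (u * (i * v)) * q := (q3 _ _).symm

/-- The centre of a loop, as a type. -/
def Center (β : Type*) [Loop β] : Type _ := {q : β // IsCentral q}

instance : CommGroup (Center β) where
  mul a b := ⟨a.1 * b.1, central_mul a.2 b.2⟩
  one := ⟨1, central_one⟩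
  inv a := ⟨Loop.ldiv a.1 1, central_inv a.2⟩
  mul_assoc a b c := Subtype.ext (a.2.2.1 b.1 c.1)
  one_mul a := Subtype.ext (Loop.one_mul a.1)
  mul_one a := Subtype.ext (Loop.mul_one a.1)
  inv_mul_cancel a := Subtype.ext (central_inv_mul a.2)
  mul_comm a b := Subtype.ext (a.2.1 b.1)

@[simp] theorem center_mul_val (a b : Center β) : (a * b).1 = a.1 * b.1 := rfl
@[simp] theorem center_one_val : ((1 : Center β)).1 = (1 : β) := rfl

/-- The key rearrangement: `(u z₁)(v z₂) = (uv)(z₁ z₂)` for central `z₁, z₂`. -/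
theorem central_rearrange {z1 z2 : β} (h1 : IsCentral z1) (h2 : IsCentral z2)
    (u v : β) : (u * z1) * (v * z2) = (u * v) * (z1 * z2) := by
  calc (u * z1) * (v * z2) = u * (z1 * (v * z2)) := h1.2.2.1 u (v * z2)
      _ = u * ((v * z2) * z1) := by rw [h1.1 (v * z2)]
      _ = (u * (v * z2)) * z1 := (h1.2.2.2 u (v * z2)).symm
      _ = ((u * v) * z2) * z1 := by rw [h2.2.2.2 u v]
      _ = (u * v) * (z2 * z1) := h1.2.2.2 _ _
      _ = (u * v) * (z1 * z2) := by rw [h1.1 z2]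

end Center

instance {β : Type*} [Loop β] : Loop (ULift.{s} β) where
  mul a b := ⟨a.down * b.down⟩
  one := ⟨1⟩
  ldiv a b := ⟨Loop.ldiv a.down b.down⟩
  rdiv a b := ⟨Loop.rdiv a.down b.down⟩
  one_mul a := congrArg ULift.up (Loop.one_mul a.down)
  mul_one a := congrArg ULift.up (Loop.mul_one a.down)
  mul_ldiv a b := congrArg ULift.up (Loop.mul_ldiv a.down b.down)
  ldiv_mul a b := congrArg ULift.up (Loop.ldiv_mul a.down b.down)
  rdiv_mul a b := congrArg ULift.up (Loop.rdiv_mul a.down b.down)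
  mul_rdiv a b := congrArg ULift.up (Loop.mul_rdiv a.down b.down)

theorem loophom_ldiv {β γ : Type*} [Loop β] [Loop γ] {h : β → γ}
    (hh : Loop.IsLoopHom h) (a b : β) : h (Loop.ldiv a b) = Loop.ldiv (h a) (h b) := by
  apply lcancel (a := h a)
  rw [← hh a (Loop.ldiv a b), Loop.mul_ldiv, Loop.mul_ldiv]

theorem loophom_rdiv {β γ : Type*} [Loop β] [Loop γ] {h : β → γ}
    (hh : Loop.IsLoopHom h) (a b : β) : h (Loop.rdiv a b) = Loop.rdiv (h a) (h b) := by
  apply rcancel (a := h b)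
  rw [← hh (Loop.rdiv a b) b, Loop.rdiv_mul, Loop.rdiv_mul]

theorem loophom_one {β γ : Type*} [Loop β] [Loop γ] {h : β → γ}
    (hh : Loop.IsLoopHom h) : h 1 = 1 := by
  apply eq_one_of_self_mul_self
  rw [← hh 1 1, Loop.mul_one]

section HL

variable {L : Type*} {B : Type*} [Loop L] [AddCommGroup B]
variable (f : L → L → B) (hf1 : ∀ l : L, f l 1 = 0) (hf2 : ∀ l : L, f 1 l = 0)
include hf1 hf2
set_option linter.unusedSectionVars false

theorem hldiv_hmul (u v : L × B) : hldiv f u (hmul f u v) = v := by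
  unfold hldiv hmul
  refine Prod.ext ?_ ?_
  · exact Loop.ldiv_mul u.1 v.1
  · simp only [Loop.ldiv_mul]
    abel

theorem hrdiv_hmul (u v : L × B) : hrdiv f (hmul f u v) v = u := by
  unfold hrdiv hmul
  refine Prod.ext ?_ ?_
  · exact Loop.mul_rdiv u.1 v.1
  · simp only [Loop.mul_rdiv]
    abel

theorem hmul_oneb (u : L × B) (c : B) : hmul f u (1, c) = (u.1, u.2 + c) := by
  unfold hmul
  refine Prod.ext (Loop.mul_one u.1) ?_
  simp [hf1]

theorem hmul_bone (u : L × B) (c : B) : hmul f (1, c) u = (u.1, c + u.2) := by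
  unfold hmul
  refine Prod.ext (Loop.one_mul u.1) ?_
  simp [hf2]

theorem hldiv_self (u : L × B) : hldiv f u u = (1, 0) := by
  unfold hldiv
  refine Prod.ext (ldiv_self u.1) ?_
  rw [ldiv_self, hf1]
  abel

theorem hrdiv_self (u : L × B) : hrdiv f u u = (1, 0) := by
  unfold hrdiv
  refine Prod.ext (rdiv_self u.1) ?_
  rw [rdiv_self, hf2]
  abel

theorem hldiv_eq_of_eq {u v : L × B} (h : u = v) : hldiv f u v = (1, 0) :=
  h ▸ hldiv_self f hf1 hf2 u

theorem hcomm_left (c : B) (u : L × B) : hcomm f (1, c) u = (1, 0) := by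
  unfold hcomm
  rw [hmul_oneb f hf1 hf2, hmul_bone f hf1 hf2]
  apply hldiv_eq_of_eq f hf1 hf2
  refine Prod.ext rfl ?_
  simp [add_comm]

theorem hcomm_right (c : B) (u : L × B) : hcomm f u (1, c) = (1, 0) := by
  unfold hcomm
  rw [hmul_oneb f hf1 hf2, hmul_bone f hf1 hf2]
  apply hldiv_eq_of_eq f hf1 hf2
  refine Prod.ext rfl ?_
  simp [add_comm]

theorem hassoc_left (c : B) (u v : L × B) : hassoc f (1, c) u v = (1, 0) := by
  unfold hassoc
  rw [hmul_bone f hf1 hf2, hmul_bone f hf1 hf2]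
  apply hldiv_eq_of_eq f hf1 hf2
  unfold hmul
  refine Prod.ext rfl ?_
  dsimp only
  abel

theorem hassoc_mid (c : B) (u v : L × B) : hassoc f u (1, c) v = (1, 0) := by
  unfold hassoc
  rw [hmul_bone f hf1 hf2, hmul_oneb f hf1 hf2]
  apply hldiv_eq_of_eq f hf1 hf2
  unfold hmul
  refine Prod.ext rfl ?_
  dsimp only
  abel

theorem hassoc_right (c : B) (u v : L × B) : hassoc f u v (1, c) = (1, 0) := by
  unfold hassoc
  rw [hmul_oneb f hf1 hf2, hmul_oneb f hf1 hf2]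
  apply hldiv_eq_of_eq f hf1 hf2
  unfold hmul
  refine Prod.ext rfl ?_
  dsimp only
  abel

end HL

end HigmanAux

open HigmanAux in
/-- Higman's lemma: let `F` be the free loop on a set `X` (with
inclusion `ι`), `p : F → L` a surjective loop homomorphism with kernel `N`,
`B` the free abelian group on symbols `f(l1,l2)` (`l1, l2 ≠ 1` in `L`) and
`g(x)` (`x ∈ X`), and `δ : F → (L,B)` the homomorphism into Higman's loop with
`δ x = (p x, g(x))` on generators.  Then `ker δ = [N, F]`.
Here `B = FreeAbelianGroup ((L × L) ⊕ X)`, the symbol `f(l1,l2)` being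
`Sum.inl (l1,l2)` (set to `0` when `l1 = 1` or `l2 = 1`) and `g(x)` being
`Sum.inr x`. -/
theorem higman_lemma {X : Type v} {F : Type u} [Loop F] (ι : X → F)
    (hfree : ∀ (M : Type max u v w) [Loop M] (φ : X → M),
      ∃! h : F → M, Loop.IsLoopHom h ∧ h ∘ ι = φ)
    {L : Type w} [Loop L] (p : F → L) (hp : Loop.IsLoopHom p)
    (hsurj : Function.Surjective p)
    (f : L → L → FreeAbelianGroup ((L × L) ⊕ X))
    (hf1 : ∀ l : L, f l 1 = 0) (hf2 : ∀ l : L, f 1 l = 0)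
    (hf : ∀ l1 l2 : L, l1 ≠ 1 → l2 ≠ 1 → f l1 l2 =
      FreeAbelianGroup.of (Sum.inl (l1, l2)))
    (δ : F → L × FreeAbelianGroup ((L × L) ⊕ X))
    (hδ : ∀ a b : F, δ (a * b) = hmul f (δ a) (δ b))
    (hδι : ∀ x : X, δ (ι x) = (p (ι x), FreeAbelianGroup.of (Sum.inr x))) :
    {w : F | δ w = ((1 : L), 0)} = Loop.bracket (p ⁻¹' {1}) := by
  classical
  have hB : True := trivial
  -- δ preserves divisions and 1
  have hδl : ∀ a b : F, δ (Loop.ldiv a b) = hldiv f (δ a) (δ b) := by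
    intro a b
    have h := hδ a (Loop.ldiv a b)
    rw [Loop.mul_ldiv] at h
    rw [h, hldiv_hmul f hf1 hf2]
  have hδr : ∀ a b : F, δ (Loop.rdiv a b) = hrdiv f (δ a) (δ b) := by
    intro a b
    have h := hδ (Loop.rdiv a b) b
    rw [Loop.rdiv_mul] at h
    rw [h, hrdiv_hmul f hf1 hf2]
  have hδ1 : δ 1 = ((1 : L), (0 : FreeAbelianGroup ((L × L) ⊕ X))) := by
    have h := hδ 1 1
    rw [Loop.mul_one] at h
    have h1 : (δ 1).1 = (δ 1).1 * (δ 1).1 := congrArg Prod.fst h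
    have e1 : (δ 1).1 = 1 := eq_one_of_self_mul_self h1.symm
    have h2 : (δ 1).2 = (δ 1).2 + (δ 1).2 + f (δ 1).1 (δ 1).1 :=
      congrArg Prod.snd h
    rw [e1, hf1, add_zero] at h2
    have e2 : (δ 1).2 = 0 := left_eq_add.mp h2
    exact Prod.ext e1 e2
  have hp1 : p 1 = 1 := loophom_one hp
  -- fst ∘ δ = p
  have hδfst : ∀ w : F, (δ w).1 = p w := by
    obtain ⟨h, hh, huniq⟩ := hfree (ULift.{max u v, w} L) (fun x => ULift.up (p (ι x)))
    have e1 : (fun w : F => ULift.up.{max u v} ((δ w).1)) = h := by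
      apply huniq
      constructor
      · intro a b
        have := congrArg Prod.fst (hδ a b)
        exact congrArg ULift.up this
      · funext x
        exact congrArg ULift.up (congrArg Prod.fst (hδι x))
    have e2 : (fun w : F => ULift.up.{max u v} (p w)) = h := by
      apply huniq
      exact ⟨fun a b => congrArg ULift.up (hp a b), rfl⟩
    intro w
    have := congrFun (e1.trans e2.symm) w
    exact congrArg ULift.down this
  have hmemN : ∀ n : F, n ∈ p ⁻¹' {1} ↔ p n = 1 := fun n => Iff.rfl
  -- the kernel of δ
  have hKer : ∀ w : F, δ w = ((1:L), (0 : FreeAbelianGroup ((L × L) ⊕ X))) ↔ w ∈ {w : F | δ w = ((1 : L), 0)} :=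
    fun w => Iff.rfl
  -- kernel-coset helper facts
  have hKmul_r : ∀ x n : F, δ n = (1, 0) → δ (x * n) = δ x := by
    intro x n hn
    rw [hδ, hn, hmul_oneb f hf1 hf2, add_zero]
  have hKmul_l : ∀ x n : F, δ n = (1, 0) → δ (n * x) = δ x := by
    intro x n hn
    rw [hδ, hn, hmul_bone f hf1 hf2, zero_add]
  have hKrdiv : ∀ z x : F, δ z = δ x → δ (Loop.rdiv z x) = (1, 0) := by
    intro z x h
    rw [hδr, h, hrdiv_self f hf1 hf2]
  have hKldiv : ∀ x z : F, δ z = δ x → δ (Loop.ldiv x z) = (1, 0) := by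
    intro x z h
    rw [hδl, h, hldiv_self f hf1 hf2]
  apply Set.eq_of_subset_of_subset
  · -- ker δ ⊆ [N, F]
    intro w hw
    have hw' : δ w = ((1:L), (0 : FreeAbelianGroup ((L × L) ⊕ X))) := hw
    intro M hM
    obtain ⟨hMn, hMc⟩ := hM
    -- Images of elements of N are central in the quotient loop F/M.
    have central : ∀ n : F, p n = 1 → IsCentral (qmk hMn n) := by
      intro n hn
      have h5 := fun x y : F => hMc n hn x y
      refine ⟨?_, ?_, ?_, ?_⟩
      · intro u
        obtain ⟨x, rfl⟩ := qmk_surjective u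
        have h2 : qmk hMn (Loop.comm n x) = 1 := (qmk_eq_one_iff).mpr (h5 x x).1
        have h3 : Loop.ldiv (qmk hMn x * qmk hMn n) (qmk hMn n * qmk hMn x) = 1 := h2
        exact (eq_of_ldiv_eq_one h3).symm
      · intro u v
        obtain ⟨x, rfl⟩ := qmk_surjective u
        obtain ⟨y, rfl⟩ := qmk_surjective v
        have h2 : qmk hMn (Loop.assoc n x y) = 1 := (qmk_eq_one_iff).mpr (h5 x y).2.2.1
        have h3 : Loop.ldiv (qmk hMn n * (qmk hMn x * qmk hMn y))
            ((qmk hMn n * qmk hMn x) * qmk hMn y) = 1 := h2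
        exact (eq_of_ldiv_eq_one h3).symm
      · intro u v
        obtain ⟨x, rfl⟩ := qmk_surjective u
        obtain ⟨y, rfl⟩ := qmk_surjective v
        have h2 : qmk hMn (Loop.assoc x n y) = 1 := (qmk_eq_one_iff).mpr (h5 x y).2.2.2.1
        have h3 : Loop.ldiv (qmk hMn x * (qmk hMn n * qmk hMn y))
            ((qmk hMn x * qmk hMn n) * qmk hMn y) = 1 := h2
        exact (eq_of_ldiv_eq_one h3).symm
      · intro u v
        obtain ⟨x, rfl⟩ := qmk_surjective u
        obtain ⟨y, rfl⟩ := qmk_surjective v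
        have h2 : qmk hMn (Loop.assoc x y n) = 1 := (qmk_eq_one_iff).mpr (h5 x y).2.2.2.2
        have h3 : Loop.ldiv (qmk hMn x * (qmk hMn y * qmk hMn n))
            ((qmk hMn x * qmk hMn y) * qmk hMn n) = 1 := h2
        exact (eq_of_ldiv_eq_one h3).symm
    -- transversal
    let t : L → F := fun l => if l = 1 then 1 else Classical.choose (hsurj l)
    have ht : ∀ l : L, p (t l) = l := by
      intro l
      by_cases h : l = 1
      · subst h
        show p (if (1:L) = 1 then 1 else _) = 1
        rw [if_pos rfl]
        exact hp1
      · show p (if l = 1 then 1 else Classical.choose (hsurj l)) = l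
        rw [if_neg h]
        exact Classical.choose_spec (hsurj l)
    have ht1 : t 1 = 1 := if_pos rfl
    -- the cocycle and the generator images
    let c : L → L → F := fun l1 l2 => Loop.ldiv (t (l1 * l2)) (t l1 * t l2)
    have hcN : ∀ l1 l2 : L, p (c l1 l2) = 1 := by
      intro l1 l2
      show p (Loop.ldiv (t (l1 * l2)) (t l1 * t l2)) = 1
      rw [loophom_ldiv hp, hp, ht, ht, ht, ldiv_self]
    let d : X → F := fun x => Loop.ldiv (t (p (ι x))) (ι x)
    have hdN : ∀ x : X, p (d x) = 1 := by
      intro x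
      show p (Loop.ldiv (t (p (ι x))) (ι x)) = 1
      rw [loophom_ldiv hp, ht, ldiv_self]
    -- the homomorphism from B into the centre of F/M
    let gen : ((L × L) ⊕ X) → Additive (Center (HQ hMn)) :=
      Sum.elim
        (fun pr => Additive.ofMul
          (⟨qmk hMn (c pr.1 pr.2), central _ (hcN pr.1 pr.2)⟩ : Center (HQ hMn)))
        (fun x => Additive.ofMul
          (⟨qmk hMn (d x), central _ (hdN x)⟩ : Center (HQ hMn)))
    let βh : FreeAbelianGroup ((L × L) ⊕ X) →+ Additive (Center (HQ hMn)) :=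
      FreeAbelianGroup.lift gen
    let zval : FreeAbelianGroup ((L × L) ⊕ X) → HQ hMn :=
      fun b => (Additive.toMul (βh b) : Center (HQ hMn)).1
    have zval_central : ∀ b, IsCentral (zval b) :=
      fun b => (Additive.toMul (βh b) : Center (HQ hMn)).2
    have zval_zero : zval 0 = 1 := by
      show (Additive.toMul (βh 0) : Center (HQ hMn)).1 = 1
      rw [map_zero]
      rfl
    have zval_add : ∀ b1 b2, zval (b1 + b2) = zval b1 * zval b2 := by
      intro b1 b2
      show (Additive.toMul (βh (b1 + b2)) : Center (HQ hMn)).1 = _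
      rw [map_add]
      rfl
    have zval_f : ∀ l1 l2 : L, zval (f l1 l2) = qmk hMn (c l1 l2) := by
      intro l1 l2
      by_cases h1 : l1 = 1
      · subst h1
        rw [hf2, zval_zero]
        have : c 1 l2 = 1 := by
          show Loop.ldiv (t (1 * l2)) (t 1 * t l2) = 1
          rw [Loop.one_mul, ht1, Loop.one_mul, ldiv_self]
        rw [this]
        rfl
      · by_cases h2 : l2 = 1
        · subst h2
          rw [hf1, zval_zero]
          have : c l1 1 = 1 := by
            show Loop.ldiv (t (l1 * 1)) (t l1 * t 1) = 1
            rw [Loop.mul_one, ht1, Loop.mul_one, ldiv_self]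
          rw [this]
          rfl
        · rw [hf l1 l2 h1 h2]
          show (Additive.toMul (βh (FreeAbelianGroup.of (Sum.inl (l1, l2)))) :
            Center (HQ hMn)).1 = _
          rw [FreeAbelianGroup.lift_apply_of]
          rfl
    -- the retraction Θ ∘ δ
    let Θδ : F → HQ hMn := fun a => qmk hMn (t (δ a).1) * zval (δ a).2
    have hΘhom : Loop.IsLoopHom Θδ := by
      intro a b
      show qmk hMn (t (δ (a * b)).1) * zval (δ (a * b)).2 =
        (qmk hMn (t (δ a).1) * zval (δ a).2) * (qmk hMn (t (δ b).1) * zval (δ b).2)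
      rw [hδ a b]
      show qmk hMn (t ((δ a).1 * (δ b).1)) * zval ((δ a).2 + (δ b).2 + f (δ a).1 (δ b).1)
        = _
      rw [central_rearrange (zval_central (δ a).2) (zval_central (δ b).2),
        zval_add, zval_add, zval_f]
      have e1 : qmk hMn (t (δ a).1) * qmk hMn (t (δ b).1) =
          qmk hMn (t ((δ a).1 * (δ b).1)) * qmk hMn (c (δ a).1 (δ b).1) := by
        show qmk hMn (t (δ a).1 * t (δ b).1) =
          qmk hMn (t ((δ a).1 * (δ b).1) * Loop.ldiv (t ((δ a).1 * (δ b).1)) (t (δ a).1 * t (δ b).1))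
        rw [Loop.mul_ldiv]
      rw [e1]
      have hzc := central _ (hcN (δ a).1 (δ b).1)
      calc qmk hMn (t ((δ a).1 * (δ b).1)) *
            ((zval (δ a).2 * zval (δ b).2) * qmk hMn (c (δ a).1 (δ b).1))
          = qmk hMn (t ((δ a).1 * (δ b).1)) *
            (qmk hMn (c (δ a).1 (δ b).1) * (zval (δ a).2 * zval (δ b).2)) := by
            rw [hzc.1 (zval (δ a).2 * zval (δ b).2)]
        _ = (qmk hMn (t ((δ a).1 * (δ b).1)) * qmk hMn (c (δ a).1 (δ b).1)) *
            (zval (δ a).2 * zval (δ b).2) := (hzc.2.2.1 _ _).symm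
    have hΘι : ∀ x : X, Θδ (ι x) = qmk hMn (ι x) := by
      intro x
      show qmk hMn (t (δ (ι x)).1) * zval (δ (ι x)).2 = _
      rw [hδι x]
      show qmk hMn (t (p (ι x))) * zval (FreeAbelianGroup.of (Sum.inr x)) = _
      have hz : zval (FreeAbelianGroup.of (Sum.inr x)) = qmk hMn (d x) := by
        show (Additive.toMul (βh (FreeAbelianGroup.of (Sum.inr x))) :
          Center (HQ hMn)).1 = _
        rw [FreeAbelianGroup.lift_apply_of]
        rfl
      rw [hz]
      show qmk hMn (t (p (ι x)) * d x) = qmk hMn (ι x)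
      exact congrArg (qmk hMn) (Loop.mul_ldiv _ _)
    -- by freeness, Θ ∘ δ is the quotient map
    obtain ⟨h, hh, huniq⟩ := hfree (ULift.{max v w, u} (HQ hMn))
      (fun x => ULift.up (qmk hMn (ι x)))
    have e1 : (fun w : F => ULift.up.{max v w} (Θδ w)) = h := by
      apply huniq
      exact ⟨fun a b => congrArg ULift.up (hΘhom a b),
        funext fun x => congrArg ULift.up (hΘι x)⟩
    have e2 : (fun w : F => ULift.up.{max v w} (qmk hMn w)) = h := by
      apply huniq
      exact ⟨fun a b => rfl, rfl⟩
    have efinal : Θδ w = qmk hMn w :=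
      congrArg ULift.down (congrFun (e1.trans e2.symm) w)
    have hfin : qmk hMn w = 1 := by
      rw [← efinal]
      show qmk hMn (t (δ w).1) * zval (δ w).2 = 1
      rw [hw']
      show qmk hMn (t 1) * zval 0 = 1
      rw [ht1, zval_zero, Loop.mul_one]
      exact qmk_one.symm
    exact qmk_eq_one_iff.mp hfin
  · -- [N, F] ⊆ ker δ
    apply Set.sInter_subset_of_mem
    refine ⟨⟨⟨hδ1, ?_⟩, ?_, ?_, ?_⟩, ?_⟩
    · -- closure under mul, ldiv, rdiv
      intro a ha b hb
      have ha' : δ a = (1, 0) := ha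
      have hb' : δ b = (1, 0) := hb
      refine ⟨?_, ?_, ?_⟩
      · show δ (a * b) = _
        rw [hδ a b, ha', hb', hmul_oneb f hf1 hf2, add_zero]
      · show δ (Loop.ldiv a b) = _
        rw [hδl a b, ha', hb', hldiv_self f hf1 hf2]
      · show δ (Loop.rdiv a b) = _
        rw [hδr a b, ha', hb', hrdiv_self f hf1 hf2]
    · -- xK = Kx
      intro x
      ext z
      simp only [Set.mem_setOf_eq]
      constructor
      · rintro ⟨n, hn, rfl⟩
        exact ⟨Loop.rdiv (x * n) x, hKrdiv _ _ (hKmul_r x n hn),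
          (Loop.rdiv_mul _ x).symm⟩
      · rintro ⟨n, hn, rfl⟩
        exact ⟨Loop.ldiv x (n * x), hKldiv x _ (hKmul_l x n hn),
          (Loop.mul_ldiv x (n * x)).symm⟩
    · -- (Kx)y = K(xy)
      intro x y
      ext z
      simp only [Set.mem_setOf_eq]
      constructor
      · rintro ⟨n, hn, rfl⟩
        have e : δ ((n * x) * y) = δ (x * y) := by
          rw [hδ (n * x) y, hKmul_l x n hn, ← hδ x y]
        exact ⟨Loop.rdiv ((n * x) * y) (x * y), hKrdiv _ _ e,
          (Loop.rdiv_mul _ (x * y)).symm⟩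
      · rintro ⟨n, hn, rfl⟩
        have e0 : δ (n * (x * y)) = δ (x * y) := hKmul_l (x * y) n hn
        have e2 : δ (Loop.rdiv (n * (x * y)) y) = δ x := by
          rw [hδr, e0, hδ x y, hrdiv_hmul f hf1 hf2]
        refine ⟨Loop.rdiv (Loop.rdiv (n * (x * y)) y) x, hKrdiv _ _ e2, ?_⟩
        rw [Loop.rdiv_mul, Loop.rdiv_mul]
    · -- y(xK) = (yx)K
      intro x y
      ext z
      simp only [Set.mem_setOf_eq]
      constructor
      · rintro ⟨n, hn, rfl⟩
        have e : δ (y * (x * n)) = δ (y * x) := by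
          rw [hδ y (x * n), hKmul_r x n hn, ← hδ y x]
        exact ⟨Loop.ldiv (y * x) (y * (x * n)), hKldiv _ _ e,
          (Loop.mul_ldiv (y * x) _).symm⟩
      · rintro ⟨n, hn, rfl⟩
        have e0 : δ ((y * x) * n) = δ (y * x) := hKmul_r (y * x) n hn
        have e2 : δ (Loop.ldiv y ((y * x) * n)) = δ x := by
          rw [hδl, e0, hδ y x, hldiv_hmul f hf1 hf2]
        refine ⟨Loop.ldiv x (Loop.ldiv y ((y * x) * n)), hKldiv _ _ e2, ?_⟩
        rw [Loop.mul_ldiv, Loop.mul_ldiv]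
    · -- CentralMod N K
      intro n hn x y
      have hn1 : p n = 1 := hn
      have hn' : δ n = (1, (δ n).2) := by
        refine Prod.ext ?_ rfl
        rw [hδfst]
        exact hn1
      have hcm : ∀ a b : F, δ (Loop.comm a b) = hcomm f (δ a) (δ b) := by
        intro a b
        show δ (Loop.ldiv (b * a) (a * b)) = _
        rw [hδl, hδ, hδ]
        rfl
      have has : ∀ a b c : F, δ (Loop.assoc a b c) = hassoc f (δ a) (δ b) (δ c) := by
        intro a b c
        show δ (Loop.ldiv (a * (b * c)) ((a * b) * c)) = _
        rw [hδl, hδ, hδ, hδ, hδ]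
        rfl
      refine ⟨?_, ?_, ?_, ?_, ?_⟩
      · show δ (Loop.comm n x) = _
        rw [hcm, hn']
        exact hcomm_left f hf1 hf2 _ _
      · show δ (Loop.comm x n) = _
        rw [hcm, hn']
        exact hcomm_right f hf1 hf2 _ _
      · show δ (Loop.assoc n x y) = _
        rw [has, hn']
        exact hassoc_left f hf1 hf2 _ _ _
      · show δ (Loop.assoc x n y) = _
        rw [has, hn']
        exact hassoc_mid f hf1 hf2 _ _ _
      · show δ (Loop.assoc x y n) = _
        rw [has, hn']
        exact hassoc_right f hf1 hf2 _ _ _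
end
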